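/- arXiv:2510.16181 — 3 statements merged into one kernel-verified Lean document; each statement's English description precedes it below -/
import Mathlib

section
/- Let n ≥ 3 and let ε be a nonempty collection of 3-element subsets of {1,…,n} satisfying the PEUR (principle of existence and uniqueness of the replacer): for every σ ∈ ε and every k ∈ {1,…,n}, there exists a unique k' ∈ σ such that (σ \ {k'}) ∪ {k} ∈ ε. Suppose the coordinates 1 and 2 are indispensable, i.e., every σ ∈ ε contains both 1 and 2. Then ε = { {1,2,j} : j ∈ {3,…,n} }. -/
/-! Every member of `ε` contains `1`, `2` and one further coordinate, so it is some `{1, 2, j}`.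
Conversely, fix one member `{1, 2, j₀}` and any `k ≥ 3`: the replacer of `k` cannot be `1` or `2`,
since both survive in the new set, so it is `j₀` and `{1, 2, k} ∈ ε`. -/

open Finset

variable {α : Type*} [DecidableEq α]

lemma exists_eq_insert_insert_of_card_eq_three {s : Finset α} {a b : α} (hab : a ≠ b)
    (ha : a ∈ s) (hb : b ∈ s) (hs : s.card = 3) : ∃ c, c ≠ a ∧ c ≠ b ∧ s = {a, b, c} := by
  have hpair : ({a, b} : Finset α) ⊆ s := by simp [insert_subset_iff, ha, hb]
  obtain ⟨c, hc⟩ : ∃ c, s \ {a, b} = {c} := by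
    rw [← card_eq_one, card_sdiff_of_subset hpair, hs, card_pair hab]
  have hcs : c ∈ s \ {a, b} := by simp [hc]
  simp only [mem_sdiff, mem_insert, mem_singleton, not_or] at hcs
  refine ⟨c, hcs.2.1, hcs.2.2, ?_⟩
  rw [← union_sdiff_of_subset hpair, hc]
  ext x
  simp

lemma erase_union_singleton_eq_of_mem {a b c k k' : α} (hk' : k' ∈ ({a, b, c} : Finset α))
    (ha : a ∈ ({a, b, c} : Finset α).erase k' ∪ {k})
    (hb : b ∈ ({a, b, c} : Finset α).erase k' ∪ {k}) (hka : k ≠ a) (hkb : k ≠ b) :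
    ({a, b, c} : Finset α).erase k' ∪ {k} = {a, b, k} := by
  simp only [mem_insert, mem_singleton, mem_union, mem_erase] at hk' ha hb
  ext x
  simp only [mem_insert, mem_singleton, mem_union, mem_erase]
  grind

lemma mem_image_triple_of_subset_Icc {n : ℕ} {σ : Finset ℕ} (hsub : σ ⊆ Icc 1 n)
    (hcard : σ.card = 3) (h1 : 1 ∈ σ) (h2 : 2 ∈ σ) :
    σ ∈ (Icc 3 n).image (fun j => ({1, 2, j} : Finset ℕ)) := by
  obtain ⟨j, hj1, hj2, rfl⟩ := exists_eq_insert_insert_of_card_eq_three (by norm_num) h1 h2 hcard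
  have hjn := mem_Icc.1 (hsub (by simp) : j ∈ Icc 1 n)
  exact mem_image.2 ⟨j, mem_Icc.2 ⟨by omega, hjn.2⟩, rfl⟩

theorem stmt_0_general (n : ℕ) (ε : Finset (Finset ℕ))
    (hne : ε.Nonempty)
    (hsub : ∀ σ ∈ ε, σ ⊆ Finset.Icc 1 n)
    (hcard : ∀ σ ∈ ε, σ.card = 3)
    (hPEUR : ∀ σ ∈ ε, ∀ k ∈ Finset.Icc 1 n,
      ∃! k', k' ∈ σ ∧ (σ.erase k' ∪ {k}) ∈ ε)
    (hind : ∀ σ ∈ ε, 1 ∈ σ ∧ 2 ∈ σ) :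
    ε = (Finset.Icc 3 n).image (fun j => ({1, 2, j} : Finset ℕ)) := by
  have hshape : ∀ σ ∈ ε, σ ∈ (Icc 3 n).image (fun j => ({1, 2, j} : Finset ℕ)) := fun σ hσ =>
    mem_image_triple_of_subset_Icc (hsub σ hσ) (hcard σ hσ) (hind σ hσ).1 (hind σ hσ).2
  refine Subset.antisymm hshape ?_
  obtain ⟨σ₀, hσ₀⟩ := hne
  obtain ⟨j₀, -, hσ₀eq⟩ := mem_image.1 (hshape σ₀ hσ₀)
  intro τ hτ
  obtain ⟨k, hk, rfl⟩ := mem_image.1 hτ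
  have hk := mem_Icc.1 hk
  obtain ⟨k', hk'σ, hk'ε⟩ := (hPEUR σ₀ hσ₀ k (mem_Icc.2 ⟨by omega, hk.2⟩)).exists
  subst hσ₀eq
  rwa [← erase_union_singleton_eq_of_mem hk'σ (hind _ hk'ε).1 (hind _ hk'ε).2 (by omega) (by omega)]

theorem stmt_0 (n : ℕ) (hn : 3 ≤ n) (ε : Finset (Finset ℕ))
    (hne : ε.Nonempty)
    (hsub : ∀ σ ∈ ε, σ ⊆ Finset.Icc 1 n)
    (hcard : ∀ σ ∈ ε, σ.card = 3)
    (hPEUR : ∀ σ ∈ ε, ∀ k ∈ Finset.Icc 1 n,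
      ∃! k', k' ∈ σ ∧ (σ.erase k' ∪ {k}) ∈ ε)
    (hind : ∀ σ ∈ ε, 1 ∈ σ ∧ 2 ∈ σ) :
    ε = (Finset.Icc 3 n).image (fun j => ({1, 2, j} : Finset ℕ)) :=
  stmt_0_general n ε hne hsub hcard hPEUR hind
end

section
/- Let m ≥ 1 and n = 2m+2, and let ε be a fundamental set of (2m+1)-subsets of {1,…,n} satisfying PEUR, with coordinates 1,…,m+1 indispensable and |ε| ≥ 2. Then |ε| = 2. -/
/-!
Since `|σ| = n - 1`, every `σ ∈ ε` is `{1,…,n}` with a single point removed. Fix `σ₀ = {1,…,n} ∖ {a}`.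
Any other member `{1,…,n} ∖ {b}` arises from `σ₀` by exchanging `b` for `a`, so PEUR at `σ₀` and `k = a`
determines `b`: besides `σ₀` there is at most one member of `ε`.
-/

namespace Finset

variable {α : Type*} [DecidableEq α]

/-- The exchange property PEUR of a family `ε` of subsets of `U`. -/
def UniqueExchange (U : Finset α) (ε : Finset (Finset α)) : Prop :=
  ∀ σ ∈ ε, ∀ k ∈ U, ∃! k', k' ∈ σ ∧ σ.erase k' ∪ {k} ∈ ε

lemma covBy_of_subset_of_card_add_one {s t : Finset α} (hst : s ⊆ t) (hcard : #s + 1 = #t) :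
    s ⋖ t :=
  covBy_iff_card_sdiff_eq_one.2 ⟨hst, by rw [card_sdiff_of_subset hst]; omega⟩

lemma erase_erase_union_singleton {U : Finset α} {a b : α} (ha : a ∈ U) (hba : b ≠ a) :
    (U.erase a).erase b ∪ {a} = U.erase b := by
  rw [union_singleton, erase_right_comm, insert_erase (mem_erase.2 ⟨hba.symm, ha⟩)]

lemma UniqueExchange.exists_forall_eq_erase {U : Finset α} {ε : Finset (Finset α)}
    (hε : UniqueExchange U ε) (hcov : ∀ σ ∈ ε, σ ⋖ U) {a : α} (ha : a ∈ U)
    (hσ₀ : U.erase a ∈ ε) : ∃ k, ∀ τ ∈ ε.erase (U.erase a), τ = U.erase k := by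
  obtain ⟨k, -, hk⟩ := hε _ hσ₀ a ha
  refine ⟨k, fun τ hτ ↦ ?_⟩
  obtain ⟨hne, hτε⟩ := mem_erase.1 hτ
  obtain ⟨b, hb, rfl⟩ := (hcov τ hτε).exists_finset_erase
  have hba : b ≠ a := by rintro rfl; exact hne rfl
  rw [hk b ⟨mem_erase.2 ⟨hba, hb⟩, by rwa [erase_erase_union_singleton ha hba]⟩]

theorem UniqueExchange.card_le_two {U : Finset α} {ε : Finset (Finset α)}
    (hε : UniqueExchange U ε) (hcov : ∀ σ ∈ ε, σ ⋖ U) : #ε ≤ 2 := by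
  rcases ε.eq_empty_or_nonempty with rfl | ⟨σ₀, hσ₀⟩
  · simp
  obtain ⟨a, ha, rfl⟩ := (hcov σ₀ hσ₀).exists_finset_erase
  obtain ⟨k, hk⟩ := hε.exists_forall_eq_erase hcov ha hσ₀
  have hrest : #(ε.erase (U.erase a)) ≤ 1 :=
    card_le_one.2 fun τ hτ τ' hτ' ↦ (hk τ hτ).trans (hk τ' hτ').symm
  rw [card_erase_of_mem hσ₀] at hrest
  omega

end Finset

theorem stmt_10_general (m n : ℕ) (hn : n = 2 * m + 2)
    (ε : Finset (Finset ℕ))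
    (hsub : ∀ σ ∈ ε, σ ⊆ Finset.Icc 1 n)
    (hcard : ∀ σ ∈ ε, σ.card = 2 * m + 1)
    (hPEUR : ∀ σ ∈ ε, ∀ k ∈ Finset.Icc 1 n,
      ∃! k', k' ∈ σ ∧ (σ.erase k' ∪ {k}) ∈ ε)
    (hge : 2 ≤ ε.card) :
    ε.card = 2 := by
  have hcov : ∀ σ ∈ ε, σ ⋖ Finset.Icc 1 n := fun σ hσ ↦
    Finset.covBy_of_subset_of_card_add_one (hsub σ hσ) (by simp [hcard σ hσ, hn])
  exact le_antisymm (Finset.UniqueExchange.card_le_two hPEUR hcov) hge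

theorem stmt_10 (m n : ℕ) (hm : 1 ≤ m) (hn : n = 2 * m + 2)
    (ε : Finset (Finset ℕ)) (hne : ε.Nonempty)
    (hsub : ∀ σ ∈ ε, σ ⊆ Finset.Icc 1 n)
    (hcard : ∀ σ ∈ ε, σ.card = 2 * m + 1)
    (hPEUR : ∀ σ ∈ ε, ∀ k ∈ Finset.Icc 1 n,
      ∃! k', k' ∈ σ ∧ (σ.erase k' ∪ {k}) ∈ ε)
    (hind : ∀ σ ∈ ε, Finset.Icc 1 (m + 1) ⊆ σ)
    (hge : 2 ≤ ε.card) :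
    ε.card = 2 :=
  stmt_10_general m n hn ε hsub hcard hPEUR hge
end

section
/- Let m = 1, n ≥ 4, and let ε be a fundamental set of 3-subsets of {1,…,n} in which exactly three coordinates, say 1, 2, 3, are indispensable. Then ε = {{1,2,3}} and ε does not satisfy PEUR. -/
theorem Finset.eq_singleton_of_forall_superset_of_card_eq {α : Type*} {ε : Finset (Finset α)}
    {s : Finset α} (hne : ε.Nonempty) (hcard : ∀ σ ∈ ε, σ.card = s.card)
    (hsup : ∀ σ ∈ ε, s ⊆ σ) : ε = {s} :=
  Finset.eq_singleton_iff_nonempty_unique_mem.2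
    ⟨hne, fun σ hσ => (Finset.eq_of_subset_of_card_le (hsup σ hσ) (hcard σ hσ).le).symm⟩

theorem Finset.erase_union_singleton_ne {α : Type*} [DecidableEq α] {s : Finset α} {k : α}
    (hk : k ∉ s) (k' : α) : s.erase k' ∪ {k} ≠ s :=
  fun h => hk (h ▸ Finset.mem_union_right _ (Finset.mem_singleton_self k))

theorem stmt_11_general (n : ℕ) (hn : 4 ≤ n) (ε : Finset (Finset ℕ))
    (hne : ε.Nonempty)
    (hcard : ∀ σ ∈ ε, σ.card = 3)
    (hind : ∀ σ ∈ ε, ({1, 2, 3} : Finset ℕ) ⊆ σ) :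
    ε = {({1, 2, 3} : Finset ℕ)} ∧
    ¬ (∀ σ ∈ ε, ∀ k ∈ Finset.Icc 1 n,
      ∃! k', k' ∈ σ ∧ (σ.erase k' ∪ {k}) ∈ ε) := by
  have hε : ε = {({1, 2, 3} : Finset ℕ)} :=
    Finset.eq_singleton_of_forall_superset_of_card_eq hne hcard hind
  refine ⟨hε, fun hpeur => ?_⟩
  obtain ⟨k', ⟨-, hmem⟩, -⟩ :=
    hpeur {1, 2, 3} (by simp [hε]) 4 (Finset.mem_Icc.2 ⟨by norm_num, hn⟩)
  rw [hε, Finset.mem_singleton] at hmem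
  exact Finset.erase_union_singleton_ne (by decide) k' hmem

theorem stmt_11 (n : ℕ) (hn : 4 ≤ n) (ε : Finset (Finset ℕ))
    (hne : ε.Nonempty)
    (hsub : ∀ σ ∈ ε, σ ⊆ Finset.Icc 1 n)
    (hcard : ∀ σ ∈ ε, σ.card = 3)
    (hind : ∀ σ ∈ ε, ({1, 2, 3} : Finset ℕ) ⊆ σ) :
    ε = {({1, 2, 3} : Finset ℕ)} ∧
    ¬ (∀ σ ∈ ε, ∀ k ∈ Finset.Icc 1 n,
      ∃! k', k' ∈ σ ∧ (σ.erase k' ∪ {k}) ∈ ε) :=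
  stmt_11_general n hn ε hne hcard hind
end
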